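/- Let k be a field, V a k-vector space, and R a k-linear endomorphism of V⊗V. Then R is a solution of the Hopf equation (R¹²R²³ = R²³R¹³R¹²) if and only if T := τ∘R satisfies the equation T¹²T²³T¹² = T²³τ¹²T²³ in End(V⊗V⊗V), where τ : V⊗V → V⊗V is the flip map and τ¹² = τ⊗I. -/
import Mathlib


open TensorProduct LinearMap

section HopfEq

variable (k V : Type*) [Field k] [AddCommGroup V] [Module k V]

/-- The flip map `τ : V ⊗ V → V ⊗ V`, `τ(v ⊗ w) = w ⊗ v`. -/
noncomputable def flipMap : V ⊗[k] V →ₗ[k] V ⊗[k] V :=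
  (TensorProduct.comm k V V).toLinearMap

variable {k V}

/-- `R¹² = R ⊗ I` as an endomorphism of `V ⊗ V ⊗ V`. -/
noncomputable def map12 (R : V ⊗[k] V →ₗ[k] V ⊗[k] V) :
    V ⊗[k] (V ⊗[k] V) →ₗ[k] V ⊗[k] (V ⊗[k] V) :=
  (TensorProduct.assoc k V V V).toLinearMap ∘ₗ R.rTensor V ∘ₗ
    (TensorProduct.assoc k V V V).symm.toLinearMap

/-- `R²³ = I ⊗ R` as an endomorphism of `V ⊗ V ⊗ V`. -/
noncomputable def map23 (R : V ⊗[k] V →ₗ[k] V ⊗[k] V) :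
    V ⊗[k] (V ⊗[k] V) →ₗ[k] V ⊗[k] (V ⊗[k] V) :=
  R.lTensor V

/-- `R¹³ = (I ⊗ τ)(R ⊗ I)(I ⊗ τ)` as an endomorphism of `V ⊗ V ⊗ V`. -/
noncomputable def map13 (R : V ⊗[k] V →ₗ[k] V ⊗[k] V) :
    V ⊗[k] (V ⊗[k] V) →ₗ[k] V ⊗[k] (V ⊗[k] V) :=
  (flipMap k V).lTensor V ∘ₗ map12 R ∘ₗ (flipMap k V).lTensor V

/-- `R` is a solution of the Hopf equation: `R¹²R²³ = R²³R¹³R¹²`. -/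
def IsHopfSolution (R : V ⊗[k] V →ₗ[k] V ⊗[k] V) : Prop :=
  map12 R ∘ₗ map23 R = map23 R ∘ₗ map13 R ∘ₗ map12 R

/-- `R` is a solution of the pentagonal equation: `R¹²R¹³R²³ = R²³R¹²`. -/
def IsPentagonSolution (R : V ⊗[k] V →ₗ[k] V ⊗[k] V) : Prop :=
  map12 R ∘ₗ map13 R ∘ₗ map23 R = map23 R ∘ₗ map12 R

end HopfEq



section Aux
variable {k V : Type*} [Field k] [AddCommGroup V] [Module k V]

lemma map12_comp (A B : V ⊗[k] V →ₗ[k] V ⊗[k] V) :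
    map12 (A ∘ₗ B) = (map12 A ∘ₗ map12 B : V ⊗[k] (V ⊗[k] V) →ₗ[k] V ⊗[k] (V ⊗[k] V)) := by
  simp only [map12, rTensor_comp]
  ext x y z
  simp

lemma map23_comp (A B : V ⊗[k] V →ₗ[k] V ⊗[k] V) :
    map23 (A ∘ₗ B) = (map23 A ∘ₗ map23 B : V ⊗[k] (V ⊗[k] V) →ₗ[k] V ⊗[k] (V ⊗[k] V)) := by
  simp only [map23, lTensor_comp]

lemma flipMap_sq : (flipMap k V ∘ₗ flipMap k V) = LinearMap.id := by
  ext x y; simp [flipMap]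

lemma map12_id : map12 (LinearMap.id : V ⊗[k] V →ₗ[k] V ⊗[k] V) = LinearMap.id := by
  ext x y z; simp [map12]

lemma map23_id : map23 (LinearMap.id : V ⊗[k] V →ₗ[k] V ⊗[k] V) = LinearMap.id := by
  simp [map23]
end Aux

section Aux2
variable {k V : Type*} [Field k] [AddCommGroup V] [Module k V]

lemma map12_flip_apply (s : V ⊗[k] V) (x : V) :
    map12 (flipMap k V) (x ⊗ₜ[k] s)
      = (flipMap k V).lTensor V ((TensorProduct.assoc k V V V) (s ⊗ₜ[k] x)) := by
  induction s using TensorProduct.induction_on with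
  | zero => simp [map12]
  | tmul a b => simp [map12, flipMap]
  | add u v hu hv =>
      simp only [TensorProduct.tmul_add, TensorProduct.add_tmul, map_add, hu, hv]

lemma flip_comm (R : V ⊗[k] V →ₗ[k] V ⊗[k] V) :
    map12 (flipMap k V) ∘ₗ map23 R = map13 R ∘ₗ map12 (flipMap k V) := by
  ext x y z
  simp only [comp_apply, TensorProduct.AlgebraTensorModule.curry_apply, curry_apply,
    coe_restrictScalars, map23, lTensor_tmul, id_coe, id_eq]
  rw [map12_flip_apply]
  have h2 : map12 (flipMap k V) (x ⊗ₜ[k] (y ⊗ₜ[k] z)) = y ⊗ₜ[k] (x ⊗ₜ[k] z) := by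
    simp [map12, flipMap]
  rw [h2]
  simp only [map13, comp_apply, lTensor_tmul, flipMap, LinearEquiv.coe_coe,
    TensorProduct.comm_tmul]
  have h3 : map12 R (y ⊗ₜ[k] (z ⊗ₜ[k] x))
      = (TensorProduct.assoc k V V V) (R (y ⊗ₜ[k] z) ⊗ₜ[k] x) := by
    simp [map12]
  rw [h3]

lemma map13_def (R : V ⊗[k] V →ₗ[k] V ⊗[k] V) :
    map13 R = map23 (flipMap k V) ∘ₗ map12 R ∘ₗ map23 (flipMap k V) := rfl

lemma m12flip_invol (f : V ⊗[k] (V ⊗[k] V) →ₗ[k] V ⊗[k] (V ⊗[k] V)) :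
    map12 (flipMap k V) ∘ₗ (map12 (flipMap k V) ∘ₗ f) = f := by
  rw [← comp_assoc, ← map12_comp, flipMap_sq, map12_id, id_comp]

lemma m23flip_invol (f : V ⊗[k] (V ⊗[k] V) →ₗ[k] V ⊗[k] (V ⊗[k] V)) :
    map23 (flipMap k V) ∘ₗ (map23 (flipMap k V) ∘ₗ f) = f := by
  rw [← comp_assoc, ← map23_comp, flipMap_sq, map23_id, id_comp]

-- comm1 : m23 t ∘ m12 R = m13 R ∘ m23 t
lemma comm1 (R : V ⊗[k] V →ₗ[k] V ⊗[k] V) :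
    map23 (flipMap k V) ∘ₗ map12 R = map13 R ∘ₗ map23 (flipMap k V) := by
  rw [map13_def, comp_assoc, comp_assoc, ← map23_comp, flipMap_sq, map23_id, comp_id]

-- chain versions
lemma c1 (R : V ⊗[k] V →ₗ[k] V ⊗[k] V) (f : V ⊗[k] (V ⊗[k] V) →ₗ[k] V ⊗[k] (V ⊗[k] V)) :
    map12 R ∘ₗ (map23 (flipMap k V) ∘ₗ f) = map23 (flipMap k V) ∘ₗ (map13 R ∘ₗ f) := by
  have h : map12 R ∘ₗ map23 (flipMap k V) = map23 (flipMap k V) ∘ₗ map13 R := by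
    rw [map13_def, ← comp_assoc, ← comp_assoc, ← map23_comp, flipMap_sq, map23_id, id_comp]
  rw [← comp_assoc, h, comp_assoc]

lemma c4 (R : V ⊗[k] V →ₗ[k] V ⊗[k] V) (f : V ⊗[k] (V ⊗[k] V) →ₗ[k] V ⊗[k] (V ⊗[k] V)) :
    map13 R ∘ₗ (map23 (flipMap k V) ∘ₗ f) = map23 (flipMap k V) ∘ₗ (map12 R ∘ₗ f) := by
  rw [← comp_assoc, ← comm1, comp_assoc]

lemma c3 (R : V ⊗[k] V →ₗ[k] V ⊗[k] V) (f : V ⊗[k] (V ⊗[k] V) →ₗ[k] V ⊗[k] (V ⊗[k] V)) :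
    map13 R ∘ₗ (map12 (flipMap k V) ∘ₗ f) = map12 (flipMap k V) ∘ₗ (map23 R ∘ₗ f) := by
  rw [← comp_assoc, ← flip_comm, comp_assoc]

lemma c2 (R : V ⊗[k] V →ₗ[k] V ⊗[k] V) (f : V ⊗[k] (V ⊗[k] V) →ₗ[k] V ⊗[k] (V ⊗[k] V)) :
    map23 R ∘ₗ (map12 (flipMap k V) ∘ₗ f) = map12 (flipMap k V) ∘ₗ (map13 R ∘ₗ f) := by
  conv_lhs => rw [← m12flip_invol (map23 R ∘ₗ (map12 (flipMap k V) ∘ₗ f))]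
  rw [← c3, m12flip_invol]

-- braid: m23t ∘ (m12t ∘ (m23t ∘ g)) = m12t ∘ (m23t ∘ (m12t ∘ g))
lemma braid (g : V ⊗[k] (V ⊗[k] V) →ₗ[k] V ⊗[k] (V ⊗[k] V)) :
    map23 (flipMap k V) ∘ₗ (map12 (flipMap k V) ∘ₗ (map23 (flipMap k V) ∘ₗ g))
      = map12 (flipMap k V) ∘ₗ (map23 (flipMap k V) ∘ₗ (map12 (flipMap k V) ∘ₗ g)) := by
  rw [c2, c4]

end Aux2

/-- `R` satisfies the Hopf equation iff `T := τ∘R` satisfies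
`T¹²T²³T¹² = T²³τ¹²T²³`. -/
theorem hopf_iff_flip_comp_eq (k V : Type*) [Field k] [AddCommGroup V] [Module k V]
    (R : V ⊗[k] V →ₗ[k] V ⊗[k] V) :
    IsHopfSolution R ↔
      map12 (flipMap k V ∘ₗ R) ∘ₗ map23 (flipMap k V ∘ₗ R) ∘ₗ map12 (flipMap k V ∘ₗ R)
        = map23 (flipMap k V ∘ₗ R) ∘ₗ map12 (flipMap k V) ∘ₗ map23 (flipMap k V ∘ₗ R) := by
  rw [IsHopfSolution, map12_comp, map23_comp]
  simp only [comp_assoc]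
  rw [c1, c2, c2, c3, c4, braid]
  constructor
  · intro h; rw [h]
  · intro h
    have h2 := congrArg (fun f => map12 (flipMap k V) ∘ₗ (map23 (flipMap k V) ∘ₗ
      (map12 (flipMap k V) ∘ₗ f))) h
    simp only [m12flip_invol, m23flip_invol] at h2
    exact h2.symm
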